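/- (Mehler–Heine formula for Charlier polynomials) Let a > 0 be real. For every complex number x, lim_{n→∞} a^n · C_n(x;a)/Γ(n−x) = e^a/Γ(−x), where Γ is the Gamma function and 1/Γ(−x) is interpreted as 0 when −x is a nonpositive integer. -/

import Mathlib

/-!
Expanding `(-n)_j = (-1)^j n!/(n-j)!` gives `aⁿ C_n(x;a) = ∑_j C(n,j) (-x)_j a^(n-j)`.
If `x ∉ ℕ`, dividing by `Γ(n-x) = (-x)_n Γ(-x)` and reindexing by `k = n - j` turns this into
`Γ(-x)⁻¹ ∑_{k ≤ n} a^k/k! ∏_{i<k} g(n-k+i)` with `g m = (m+1)/(m-x)`; as `g` is bounded and tends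
to `1`, Tannery's theorem gives the limit `e^a / Γ(-x)`. If `x = m ∈ ℕ`, then `(-m)_j = 0` for
`j > m`, so only `m + 1` terms survive, each of size `O(nᵐ aⁿ / (n-m-1)!) → 0`.
-/

open Filter Topology Finset

/-- The Pochhammer symbol (rising factorial) `(u)_k = u (u+1) ⋯ (u+k-1)`, with `(u)_0 = 1`. -/
noncomputable def poch (u : ℂ) (k : ℕ) : ℂ := ∏ i ∈ range k, (u + i)

/-- The Charlier polynomial `C_n(x; a) = ∑_{j=0}^n (−n)_j (−x)_j / j! · (−1/a)^j`. -/
noncomputable def charlier (a : ℝ) (n : ℕ) (x : ℂ) : ℂ :=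
  ∑ j ∈ range (n + 1),
    poch (-(n : ℂ)) j * poch (-x) j / (j.factorial : ℂ) * (-(1 / (a : ℂ))) ^ j

open Nat

lemma poch_succ (u : ℂ) (k : ℕ) : poch u (k + 1) = poch u k * (u + k) :=
  prod_range_succ _ _

lemma poch_add (u : ℂ) (j k : ℕ) : poch u (j + k) = poch u j * poch (u + j) k := by
  rw [poch, prod_range_add]
  congr 1
  exact prod_congr rfl fun i _ => by push_cast; ring

lemma poch_neg_natCast (n j : ℕ) : poch (-(n : ℂ)) j = (-1) ^ j * n.descFactorial j := by
  induction j with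
  | zero => simp [poch]
  | succ j ih =>
    rw [poch_succ, ih, descFactorial_succ]
    rcases le_or_gt j n with h | h
    · push_cast [h]; ring
    · simp [descFactorial_eq_zero_iff_lt.mpr h]

lemma poch_ne_zero {u : ℂ} (hu : ∀ m : ℕ, u ≠ -m) (k : ℕ) : poch u k ≠ 0 :=
  prod_ne_zero_iff.mpr fun i _ h => hu i (eq_neg_of_add_eq_zero_left h)

lemma Gamma_add_nat {u : ℂ} (hu : ∀ m : ℕ, u ≠ -m) (n : ℕ) :
    Complex.Gamma (u + n) = poch u n * Complex.Gamma u := by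
  induction n with
  | zero => simp [poch]
  | succ n ih =>
    have hun : u + n ≠ 0 := fun h => hu n (eq_neg_of_add_eq_zero_left h)
    rw [Nat.cast_succ, ← add_assoc, Complex.Gamma_add_one _ hun, ih, poch_succ]
    ring

lemma pow_mul_charlier {a : ℝ} (ha : a ≠ 0) (n : ℕ) (x : ℂ) :
    (a : ℂ) ^ n * charlier a n x =
      ∑ j ∈ range (n + 1), (n.choose j : ℂ) * poch (-x) j * (a : ℂ) ^ (n - j) := by
  have ha' : (a : ℂ) ≠ 0 := by exact_mod_cast ha
  rw [charlier, mul_sum]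
  refine sum_congr rfl fun j hj => ?_
  have hjn : j ≤ n := Nat.lt_succ_iff.mp (mem_range.mp hj)
  have hfac : (j ! : ℂ) ≠ 0 := by exact_mod_cast j.factorial_ne_zero
  have hsign : ((-1 : ℂ) ^ j) ^ 2 = 1 := by rw [← pow_mul, mul_comm, pow_mul]; norm_num
  have hpow : (-(1 / (a : ℂ))) ^ j = (-1) ^ j / (a : ℂ) ^ j := by rw [← div_pow, neg_div]
  rw [poch_neg_natCast, descFactorial_eq_factorial_mul_choose, ← pow_sub_mul_pow _ hjn, hpow]
  push_cast
  field_simp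
  rw [hsign]
  field_simp

lemma choose_mul_poch_div_Gamma {x : ℂ} (hx : ∀ m : ℕ, x ≠ m) (j k : ℕ) :
    ((j + k).choose j : ℂ) * poch (-x) j / Complex.Gamma (((j + k : ℕ) : ℂ) - x) =
      (∏ i ∈ range k, (((j + i : ℕ) : ℂ) + 1) / ((j + i : ℕ) - x)) / k ! / Complex.Gamma (-x) := by
  have hx' : ∀ m : ℕ, -x ≠ -m := fun m h => hx m (neg_injective h)
  have hΓ : Complex.Gamma (((j + k : ℕ) : ℂ) - x) =
      poch (-x) j * poch (-x + j) k * Complex.Gamma (-x) := by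
    rw [← poch_add, ← Gamma_add_nat hx', sub_eq_neg_add]
  have hchoose : ((j + k).choose j : ℂ) * k ! = ∏ i ∈ range k, (((j + i : ℕ) : ℂ) + 1) := by
    rw [choose_symm_add, mul_comm]
    exact_mod_cast (ascFactorial_eq_factorial_mul_choose j k).symm.trans
      (by rw [ascFactorial_eq_prod_range]; exact prod_congr rfl fun i _ => by ring)
  have hpoch : poch (-x + j) k = ∏ i ∈ range k, (((j + i : ℕ) : ℂ) - x) :=
    prod_congr rfl fun i _ => by push_cast; ring
  have hpoch_left_ne : poch (-x) j ≠ 0 := poch_ne_zero hx' j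
  have hpoch_right_ne : poch (-x + j) k ≠ 0 :=
    poch_ne_zero (fun m h => hx (j + m) (by push_cast; linear_combination -h)) k
  have hfac : (k ! : ℂ) ≠ 0 := by exact_mod_cast k.factorial_ne_zero
  have hΓ_ne : Complex.Gamma (-x) ≠ 0 := Complex.Gamma_ne_zero hx'
  rw [hΓ, prod_div_distrib, ← hchoose, ← hpoch]
  field_simp

theorem tendsto_sum_pow_div_factorial_mul_prod {g : ℕ → ℂ} (hg : Tendsto g atTop (𝓝 1)) (z : ℂ) :
    Tendsto (fun n => ∑ k ∈ range (n + 1), z ^ k / k ! * ∏ i ∈ range k, g (n - k + i))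
      atTop (𝓝 (Complex.exp z)) := by
  obtain ⟨B, hB⟩ := hg.norm.bddAbove_range
  set F : ℕ → ℕ → ℂ := fun n k => if k ≤ n then z ^ k / k ! * ∏ i ∈ range k, g (n - k + i) else 0
  have hF_sum (n : ℕ) :
      ∑' k, F n k = ∑ k ∈ range (n + 1), z ^ k / k ! * ∏ i ∈ range k, g (n - k + i) := by
    rw [tsum_eq_sum (s := range (n + 1)) fun k hk =>
      if_neg (by simpa [Nat.lt_succ_iff] using hk : ¬k ≤ n)]
    exact sum_congr rfl fun k hk => if_pos (Nat.lt_succ_iff.mp (mem_range.mp hk))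
  have hF_lim (k : ℕ) : Tendsto (F · k) atTop (𝓝 (z ^ k / k !)) := by
    have hprod : Tendsto (fun n => ∏ i ∈ range k, g (n - k + i)) atTop (𝓝 1) := by
      simpa using tendsto_finsetProd (range k) fun i _ =>
        hg.comp ((tendsto_add_atTop_nat i).comp (tendsto_sub_atTop_nat k))
    refine (by simpa using hprod.const_mul (z ^ k / k !) : Tendsto _ _ _).congr' ?_
    filter_upwards [eventually_ge_atTop k] with n hn
    exact (if_pos hn).symm
  have hF_le (n k : ℕ) : ‖F n k‖ ≤ (‖z‖ * B) ^ k / k ! := by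
    by_cases hk : k ≤ n
    · have hprod : ∏ i ∈ range k, ‖g (n - k + i)‖ ≤ B ^ k := by
        simpa using prod_le_prod (s := range k) (fun i _ => norm_nonneg _)
          fun i _ => hB ⟨n - k + i, rfl⟩
      simp only [F, if_pos hk, norm_mul, norm_div, norm_pow, Complex.norm_natCast, norm_prod]
      rw [mul_pow, mul_div_right_comm]
      gcongr
    · have hB0 : 0 ≤ B := (norm_nonneg _).trans (hB ⟨0, rfl⟩)
      simp only [F, if_neg hk, norm_zero]
      positivity
  have hexp : ∑' k, z ^ k / (k ! : ℂ) = Complex.exp z := by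
    rw [(NormedSpace.expSeries_div_hasSum_exp z).tsum_eq, Complex.exp_eq_exp_ℂ]
  simpa only [hF_sum, hexp] using tendsto_tsum_of_dominated_convergence
    (Real.summable_pow_div_factorial (‖z‖ * B)) hF_lim (Eventually.of_forall (hF_le ·))

theorem tendsto_charlier_of_forall_ne_natCast {a : ℝ} (ha : a ≠ 0) {x : ℂ}
    (hx : ∀ m : ℕ, x ≠ m) :
    Tendsto (fun n : ℕ => (a : ℂ) ^ n * charlier a n x / Complex.Gamma ((n : ℂ) - x))
      atTop (𝓝 ((Real.exp a : ℂ) / Complex.Gamma (-x))) := by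
  have hratio : Tendsto (fun m : ℕ => ((m : ℂ) + 1) / (m - x)) atTop (𝓝 1) := by
    simpa [add_comm, sub_eq_neg_add] using
      tendsto_add_mul_div_add_mul_atTop_nhds (1 : ℂ) (-x) 1 one_ne_zero
  rw [Complex.ofReal_exp]
  refine ((tendsto_sum_pow_div_factorial_mul_prod hratio a).div_const _).congr fun n => ?_
  rw [pow_mul_charlier ha, sum_div, sum_div, ← sum_range_reflect]
  refine sum_congr rfl fun k hk => ?_
  obtain ⟨j, rfl⟩ := Nat.exists_eq_add_of_le (Nat.lt_succ_iff.mp (mem_range.mp hk))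
  simp only [Nat.add_sub_cancel, Nat.add_sub_cancel_left]
  rw [mul_div_right_comm _ ((a : ℂ) ^ j), choose_mul_poch_div_Gamma hx]
  ring

lemma tendsto_pow_mul_pow_div_factorial (p : ℕ) (r : ℝ) :
    Tendsto (fun n : ℕ => (n : ℝ) ^ p * r ^ n / n !) atTop (𝓝 0) := by
  have := (tendsto_pow_const_div_const_pow_of_one_lt p one_lt_two).mul
    (FloorSemiring.tendsto_pow_div_factorial_atTop (2 * r))
  rw [mul_zero] at this
  refine this.congr fun n => ?_
  rw [mul_pow]
  field_simp

lemma tendsto_pow_mul_pow_div_factorial_sub (p q : ℕ) {r : ℝ} (hr : 0 ≤ r) :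
    Tendsto (fun n : ℕ => (n : ℝ) ^ p * r ^ n / (n - q) !) atTop (𝓝 0) := by
  refine squeeze_zero' (Eventually.of_forall fun n => by positivity) ?_
    (tendsto_pow_mul_pow_div_factorial (p + q) r)
  filter_upwards [eventually_ge_atTop q] with n hn
  have hfac : ((n - q) ! : ℝ) * n.descFactorial q = n ! := by
    exact_mod_cast factorial_mul_descFactorial hn
  have hdesc : (n.descFactorial q : ℝ) ≤ (n : ℝ) ^ q := by
    exact_mod_cast descFactorial_le_pow n q
  rw [div_le_div_iff₀ (by positivity) (by positivity), ← hfac, pow_add]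
  calc (n : ℝ) ^ p * r ^ n * ((n - q) ! * n.descFactorial q)
      ≤ (n : ℝ) ^ p * r ^ n * ((n - q) ! * (n : ℝ) ^ q) := by gcongr
    _ = (n : ℝ) ^ p * (n : ℝ) ^ q * r ^ n * (n - q) ! := by ring

lemma Gamma_natCast_sub_natCast {m n : ℕ} (h : m < n) :
    Complex.Gamma ((n : ℂ) - m) = (n - (m + 1)) ! := by
  rw [← Complex.Gamma_nat_eq_factorial]
  congr 1
  push_cast [Nat.succ_le_of_lt h]
  ring

theorem tendsto_charlier_natCast {a : ℝ} (ha : 0 < a) (m : ℕ) :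
    Tendsto (fun n : ℕ => (a : ℂ) ^ n * charlier a n m / Complex.Gamma ((n : ℂ) - m))
      atTop (𝓝 0) := by
  have hterm (j : ℕ) : Tendsto (fun n : ℕ =>
      (n.choose j : ℂ) * poch (-m) j * (a : ℂ) ^ (n - j) / Complex.Gamma ((n : ℂ) - m))
      atTop (𝓝 0) := by
    have hbound := (tendsto_pow_mul_pow_div_factorial_sub j (m + 1) ha.le).const_mul
      (‖poch (-m) j‖ / a ^ j)
    rw [mul_zero] at hbound
    refine squeeze_zero_norm' ?_ hbound
    filter_upwards [eventually_ge_atTop j, eventually_gt_atTop m] with n hj hm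
    have hchoose : (n.choose j : ℝ) ≤ (n : ℝ) ^ j := by exact_mod_cast choose_le_pow n j
    rw [Gamma_natCast_sub_natCast hm, norm_div, norm_mul, norm_mul, norm_pow, Complex.norm_real,
      Real.norm_of_nonneg ha.le, Complex.norm_natCast, Complex.norm_natCast, pow_sub₀ _ ha.ne' hj]
    calc _ = ‖poch (-m) j‖ / a ^ j * (n.choose j * a ^ n / (n - (m + 1)) !) := by ring
      _ ≤ _ := by gcongr
  have hsum : ∀ᶠ n in atTop, ∑ j ∈ range (m + 1),
      (n.choose j : ℂ) * poch (-m) j * (a : ℂ) ^ (n - j) / Complex.Gamma ((n : ℂ) - m) =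
        (a : ℂ) ^ n * charlier a n m / Complex.Gamma ((n : ℂ) - m) := by
    filter_upwards [eventually_ge_atTop m] with n hn
    rw [pow_mul_charlier ha.ne', sum_div]
    refine sum_subset (range_subset_range.mpr (by omega)) fun j _ hj => ?_
    have hjm : m < j := by simpa using hj
    simp [poch_neg_natCast, descFactorial_eq_zero_iff_lt.mpr hjm]
  simpa using (tendsto_finsetSum (range (m + 1)) fun j _ => hterm j).congr' hsum

/-- Mathlib's `Complex.Gamma` vanishes at the nonpositive integers, so `e^a / Γ(−x)` is `0` there,
as the convention `1/Γ(−x) = 0` requires. -/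
theorem charlier_mehler_heine (a : ℝ) (ha : 0 < a) (x : ℂ) :
    Tendsto (fun n : ℕ => (a : ℂ) ^ n * charlier a n x / Complex.Gamma ((n : ℂ) - x))
      atTop (𝓝 ((Real.exp a : ℂ) / Complex.Gamma (-x))) := by
  by_cases hx : ∃ m : ℕ, x = m
  · obtain ⟨m, rfl⟩ := hx
    rw [Complex.Gamma_neg_nat_eq_zero, div_zero]
    exact tendsto_charlier_natCast ha m
  · exact tendsto_charlier_of_forall_ne_natCast ha.ne' (not_exists.mp hx)
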